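/- Let x₁ < x₂ and let u ∈ C⁴([x₁,x₂]) satisfy the elastica equation (1/√(1+u'²)) · d/dx( κ_u'/√(1+u'²) ) + (1/2)κ_u³ = 0 on (x₁,x₂), where κ_u = u''/(1+u'²)^{3/2}. Define v(x) = u''(x)/(1+u'(x)²)^{5/4}. Then for every x ∈ [x₁,x₂], min{v(x₁), v(x₂)} ≤ v(x) ≤ max{v(x₁), v(x₂)}. -/

import Mathlib

/-!
Write `W = 1 + u'²`. The function `v = u'' / W^{5/4}` has derivative
`v' = (u''' W - (5/2) u' u''²) / W^{9/4}`, and differentiating once more, the elastica equation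
turns out to be exactly the linear equation `v'' = (5/2) (u' u'' / W) v'`. Hence `v'` does not
change sign on `(x₁, x₂)`, so `v` is monotone on `[x₁, x₂]`.
-/

open Real MeasureTheory

/-- The curvature of the graph `(x, u x)`. -/
noncomputable def curv (u : ℝ → ℝ) (x : ℝ) : ℝ :=
  iteratedDeriv 2 u x / (1 + deriv u x ^ 2) ^ ((3:ℝ)/2)

/-- `u` satisfies the elastica equation
`(1/√(1+u'²)) (κ_u'/√(1+u'²))' + κ_u³/2 = 0` on the set `E`. -/
def ElasticaOn (u : ℝ → ℝ) (E : Set ℝ) : Prop :=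
  ∀ x ∈ E,
    (1 / Real.sqrt (1 + deriv u x ^ 2)) *
        deriv (fun y => deriv (curv u) y / Real.sqrt (1 + deriv u y ^ 2)) x
      + (1/2) * curv u x ^ 3 = 0

open Set

lemma min_le_and_le_max_of_monotoneOn_or_antitoneOn {α β : Type*} [LinearOrder α]
    [LinearOrder β] {f : α → β} {a b x : α}
    (hf : MonotoneOn f (Icc a b) ∨ AntitoneOn f (Icc a b)) (hx : x ∈ Icc a b) :
    min (f a) (f b) ≤ f x ∧ f x ≤ max (f a) (f b) := by
  have ha : a ∈ Icc a b := left_mem_Icc.mpr (hx.1.trans hx.2)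
  have hb : b ∈ Icc a b := right_mem_Icc.mpr (hx.1.trans hx.2)
  rcases hf with hf | hf
  · exact ⟨(min_le_left _ _).trans (hf ha hx hx.1), (hf hx hb hx.2).trans (le_max_right _ _)⟩
  · exact ⟨(min_le_right _ _).trans (hf hx hb hx.2), (hf ha hx hx.1).trans (le_max_left _ _)⟩

-- `g e^{-∫a}` is constant on `s`.
lemma nonneg_or_nonpos_of_hasDerivAt_eq_mul {g a : ℝ → ℝ} {s : Set ℝ} (hs : IsOpen s)
    (hs' : IsPreconnected s) (ha : Continuous a)
    (hg : ∀ x ∈ s, HasDerivAt g (a x * g x) x) :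
    (∀ x ∈ s, 0 ≤ g x) ∨ ∀ x ∈ s, g x ≤ 0 := by
  set A : ℝ → ℝ := fun x => ∫ t in (0 : ℝ)..x, a t
  have hA : ∀ x, HasDerivAt A (a x) x := fun x =>
    (ha.integral_hasStrictDerivAt 0 x).hasDerivAt
  have hk : ∀ x ∈ s, HasDerivAt (fun y => g y * exp (-A y)) 0 x := fun x hx =>
    ((hg x hx).mul (hA x).neg.exp).congr_deriv (by ring)
  have hconst : ∀ x ∈ s, ∀ y ∈ s, g x * exp (-A x) = g y * exp (-A y) := fun x hx y hy =>
    hs.is_const_of_deriv_eq_zero hs' (fun z hz => (hk z hz).differentiableAt.differentiableWithinAt)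
      (fun z hz => (hk z hz).deriv) hx hy
  by_contra! h
  obtain ⟨⟨x, hx, hgx⟩, ⟨y, hy, hgy⟩⟩ := h
  have := hconst x hx y hy
  nlinarith [mul_pos (neg_pos.mpr hgx) (exp_pos (-A x)), mul_pos hgy (exp_pos (-A y))]

lemma monotoneOn_or_antitoneOn_of_hasDerivAt_deriv_eq_mul {f f' a : ℝ → ℝ} {D : Set ℝ}
    (hD : Convex ℝ D) (ha : Continuous a) (hf : ContinuousOn f D)
    (hf' : ∀ x ∈ interior D, HasDerivAt f (f' x) x)
    (hf'' : ∀ x ∈ interior D, HasDerivAt f' (a x * f' x) x) :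
    MonotoneOn f D ∨ AntitoneOn f D := by
  have hderiv : ∀ x ∈ interior D, HasDerivWithinAt f (f' x) (interior D) x :=
    fun x hx => (hf' x hx).hasDerivWithinAt
  rcases nonneg_or_nonpos_of_hasDerivAt_eq_mul isOpen_interior hD.interior.isPreconnected ha hf''
    with h | h
  · exact .inl (monotoneOn_of_hasDerivWithinAt_nonneg hD hf hderiv h)
  · exact .inr (antitoneOn_of_hasDerivWithinAt_nonpos hD hf hderiv h)

lemma ContDiff.hasDerivAt_iteratedDeriv {f : ℝ → ℝ} {n : WithTop ℕ∞} {k : ℕ}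
    (hf : ContDiff ℝ n f) (hk : k < n) (x : ℝ) :
    HasDerivAt (iteratedDeriv k f) (iteratedDeriv (k + 1) f x) x := by
  rw [iteratedDeriv_succ]
  exact (hf.differentiable_iteratedDeriv k hk x).hasDerivAt

lemma ContDiff.hasDerivAt_deriv {f : ℝ → ℝ} {n : WithTop ℕ∞} (hf : ContDiff ℝ n f)
    (hn : 1 < n) (x : ℝ) : HasDerivAt (deriv f) (iteratedDeriv 2 f x) x := by
  simpa only [iteratedDeriv_one] using hf.hasDerivAt_iteratedDeriv (k := 1) (by exact_mod_cast hn) x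

section Graph

variable {u : ℝ → ℝ} {x : ℝ}

-- Every power of `1 + u'²` occurring below is an integer power of `(1 + u'²)^{1/4}`.
noncomputable def lineElementSqrt (u : ℝ → ℝ) (x : ℝ) : ℝ := (1 + deriv u x ^ 2) ^ (1/4 : ℝ)

lemma lineElementSqrt_pos : 0 < lineElementSqrt u x := rpow_pos_of_pos (by positivity) _

lemma rpow_eq_lineElementSqrt_pow {c : ℝ} (k : ℕ) (hc : c = k / 4) :
    (1 + deriv u x ^ 2) ^ c = lineElementSqrt u x ^ k := by
  rw [hc, lineElementSqrt, ← rpow_mul_natCast (by positivity)]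
  ring_nf

lemma lineElementSqrt_pow_four : lineElementSqrt u x ^ 4 = 1 + deriv u x ^ 2 := by
  rw [← rpow_eq_lineElementSqrt_pow (c := 1) 4 (by norm_num), rpow_one]

lemma sqrt_eq_lineElementSqrt_sq : √(1 + deriv u x ^ 2) = lineElementSqrt u x ^ 2 := by
  rw [sqrt_eq_rpow, rpow_eq_lineElementSqrt_pow 2 (by norm_num)]

lemma curv_eq_div_lineElementSqrt_pow :
    curv u x = iteratedDeriv 2 u x / lineElementSqrt u x ^ 6 := by
  rw [curv, rpow_eq_lineElementSqrt_pow 6 (by norm_num)]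

lemma hasDerivAt_lineElementSqrt (hu : ContDiff ℝ 2 u) (x : ℝ) :
    HasDerivAt (lineElementSqrt u)
      (deriv u x * iteratedDeriv 2 u x / (2 * lineElementSqrt u x ^ 3)) x := by
  have hW : 1 + deriv u x ^ 2 ≠ 0 := by positivity
  have h := (((hu.hasDerivAt_deriv (by norm_num) x).fun_pow 2).const_add 1).rpow_const
    (p := 1/4) (.inl hW)
  refine h.congr_deriv ?_
  rw [rpow_sub_one hW, show (1 + deriv u x ^ 2) ^ (1/4 : ℝ) = lineElementSqrt u x from rfl,
    ← lineElementSqrt_pow_four]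
  have := (lineElementSqrt_pos (u := u) (x := x)).ne'
  field_simp
  ring

lemma hasDerivAt_curv (hu : ContDiff ℝ 3 u) (x : ℝ) :
    HasDerivAt (curv u)
      ((iteratedDeriv 3 u x * (1 + deriv u x ^ 2) - 3 * deriv u x * iteratedDeriv 2 u x ^ 2) /
        lineElementSqrt u x ^ 10) x := by
  have hT := (lineElementSqrt_pos (u := u) (x := x)).ne'
  rw [show curv u = fun y => iteratedDeriv 2 u y / lineElementSqrt u y ^ 6 from
    funext fun _ => curv_eq_div_lineElementSqrt_pow]
  refine ((hu.hasDerivAt_iteratedDeriv (k := 2) (by norm_num) x).fun_div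
    ((hasDerivAt_lineElementSqrt (hu.of_le (by norm_num)) x).fun_pow 6)
    (pow_ne_zero _ hT)).congr_deriv ?_
  rw [← lineElementSqrt_pow_four]
  field_simp
  ring

/-- The elastica equation multiplied by `2 (1 + u'²)^{9/2}`. -/
theorem ElasticaOn.polynomial_eq_zero (hu : ContDiff ℝ 4 u) {E : Set ℝ} (h : ElasticaOn u E)
    (hx : x ∈ E) :
    2 * (iteratedDeriv 4 u x * (1 + deriv u x ^ 2) ^ 2
      - 10 * deriv u x * iteratedDeriv 2 u x * iteratedDeriv 3 u x * (1 + deriv u x ^ 2)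
      - 3 * iteratedDeriv 2 u x ^ 3 * (1 + deriv u x ^ 2)
      + 18 * deriv u x ^ 2 * iteratedDeriv 2 u x ^ 3) + iteratedDeriv 2 u x ^ 3 = 0 := by
  have hT := (lineElementSqrt_pos (u := u) (x := x)).ne'
  have hF : (fun y => deriv (curv u) y / √(1 + deriv u y ^ 2)) = fun y =>
      (iteratedDeriv 3 u y * (1 + deriv u y ^ 2) - 3 * deriv u y * iteratedDeriv 2 u y ^ 2) /
        lineElementSqrt u y ^ 12 := by
    funext y
    rw [(hasDerivAt_curv (hu.of_le (by norm_num)) y).deriv, sqrt_eq_lineElementSqrt_sq, div_div,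
      ← pow_add]
  have hP := hu.hasDerivAt_deriv (by norm_num) x
  have hQ : HasDerivAt (iteratedDeriv 2 u) (iteratedDeriv 3 u x) x :=
    hu.hasDerivAt_iteratedDeriv (by norm_num) x
  have hR : HasDerivAt (iteratedDeriv 3 u) (iteratedDeriv 4 u x) x :=
    hu.hasDerivAt_iteratedDeriv (by norm_num) x
  have hdF := ((hR.fun_mul ((hP.fun_pow 2).const_add 1)).fun_sub
    ((hP.const_mul 3).fun_mul (hQ.fun_pow 2))).fun_div
    ((hasDerivAt_lineElementSqrt (hu.of_le (by norm_num)) x).fun_pow 12) (pow_ne_zero _ hT)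
  have heq := h x hx
  rw [hF, hdF.deriv, sqrt_eq_lineElementSqrt_sq, curv_eq_div_lineElementSqrt_pow] at heq
  rw [← lineElementSqrt_pow_four] at heq ⊢
  field_simp at heq
  refine mul_left_cancel₀ (pow_ne_zero 11 hT) ?_
  linear_combination heq

noncomputable def weightedCurv (u : ℝ → ℝ) (x : ℝ) : ℝ :=
  iteratedDeriv 2 u x / (1 + deriv u x ^ 2) ^ ((5:ℝ)/4)

noncomputable def weightedCurvDeriv (u : ℝ → ℝ) (x : ℝ) : ℝ :=
  (iteratedDeriv 3 u x * (1 + deriv u x ^ 2) - 5/2 * deriv u x * iteratedDeriv 2 u x ^ 2) /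
    lineElementSqrt u x ^ 9

lemma hasDerivAt_weightedCurv (hu : ContDiff ℝ 3 u) (x : ℝ) :
    HasDerivAt (weightedCurv u) (weightedCurvDeriv u x) x := by
  have hT := (lineElementSqrt_pos (u := u) (x := x)).ne'
  rw [show weightedCurv u = fun y => iteratedDeriv 2 u y / lineElementSqrt u y ^ 5 from
    funext fun _ => by rw [weightedCurv, rpow_eq_lineElementSqrt_pow 5 (by norm_num)]]
  refine ((hu.hasDerivAt_iteratedDeriv (k := 2) (by norm_num) x).fun_div
    ((hasDerivAt_lineElementSqrt (hu.of_le (by norm_num)) x).fun_pow 5)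
    (pow_ne_zero _ hT)).congr_deriv ?_
  rw [weightedCurvDeriv, ← lineElementSqrt_pow_four]
  field_simp
  ring

lemma ElasticaOn.hasDerivAt_weightedCurvDeriv (hu : ContDiff ℝ 4 u) {E : Set ℝ}
    (h : ElasticaOn u E) (hx : x ∈ E) :
    HasDerivAt (weightedCurvDeriv u)
      (5/2 * deriv u x * iteratedDeriv 2 u x / (1 + deriv u x ^ 2) * weightedCurvDeriv u x) x := by
  have hT := (lineElementSqrt_pos (u := u) (x := x)).ne'
  have hP := hu.hasDerivAt_deriv (by norm_num) x
  have hQ : HasDerivAt (iteratedDeriv 2 u) (iteratedDeriv 3 u x) x :=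
    hu.hasDerivAt_iteratedDeriv (by norm_num) x
  have hR : HasDerivAt (iteratedDeriv 3 u) (iteratedDeriv 4 u x) x :=
    hu.hasDerivAt_iteratedDeriv (by norm_num) x
  have hE := h.polynomial_eq_zero hu hx
  have hT4 := lineElementSqrt_pow_four (u := u) (x := x)
  refine (((hR.fun_mul ((hP.fun_pow 2).const_add 1)).fun_sub
    (((hP.const_mul (5/2)).fun_mul (hQ.fun_pow 2)))).fun_div
    ((hasDerivAt_lineElementSqrt (hu.of_le (by norm_num)) x).fun_pow 9)
    (pow_ne_zero _ hT)).congr_deriv ?_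
  rw [weightedCurvDeriv]
  rw [← hT4] at hE ⊢
  field_simp
  linear_combination lineElementSqrt u x ^ 8 * (2 * hE + 2 * iteratedDeriv 2 u x ^ 3 * hT4)

end Graph

theorem stmt_4 (x₁ x₂ : ℝ) (u : ℝ → ℝ) (hu : ContDiff ℝ 4 u)
    (heq : ElasticaOn u (Set.Ioo x₁ x₂))
    (v : ℝ → ℝ) (hv : ∀ x : ℝ, v x = iteratedDeriv 2 u x / (1 + deriv u x ^ 2) ^ ((5:ℝ)/4)) :
    ∀ x ∈ Set.Icc x₁ x₂, min (v x₁) (v x₂) ≤ v x ∧ v x ≤ max (v x₁) (v x₂) := by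
  obtain rfl : v = weightedCurv u := funext hv
  have hv' := hasDerivAt_weightedCurv (hu.of_le (by norm_num))
  have ha : Continuous fun x => 5/2 * deriv u x * iteratedDeriv 2 u x / (1 + deriv u x ^ 2) := by
    have hP := hu.continuous_deriv (by norm_num)
    have hQ := hu.continuous_iteratedDeriv 2 (by norm_num)
    exact ((continuous_const.mul hP).mul hQ).div (continuous_const.add (hP.pow 2))
      fun x => by positivity
  intro x hx
  refine min_le_and_le_max_of_monotoneOn_or_antitoneOn ?_ hx
  refine monotoneOn_or_antitoneOn_of_hasDerivAt_deriv_eq_mul (convex_Icc x₁ x₂) ha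
    (fun y _ => (hv' y).continuousAt.continuousWithinAt) (fun y _ => hv' y) ?_
  rw [interior_Icc]
  exact fun y hy => heq.hasDerivAt_weightedCurvDeriv hu hy
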